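/- arXiv:math/0305413 — 2 statements merged into one kernel-verified Lean document; each statement's English description precedes it below -/
import Mathlib

section
/- For an orthogonal linear map L of a finite-dimensional real inner product space, the codimension of the fixed-point space of L is even if det L = 1 and odd if det L = -1. -/
/-!
An orthogonal map `T` of an `n`-dimensional space satisfies `T - 1 = T (1 - Tᵀ)`, hence
`det (T - 1) = det T * (-1) ^ n * det (T - 1)`; so `det T = (-1) ^ n` as soon as `T` fixes no
nonzero vector. Composing `L` with the reflection that negates its fixed space `K` and fixes
`Kᗮ` gives such a map, so `det L * (-1) ^ dim K = (-1) ^ n`.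
-/

open Module

theorem LinearMap.det_adjoint {𝕜 E : Type*} [RCLike 𝕜] [NormedAddCommGroup E]
    [InnerProductSpace 𝕜 E] [FiniteDimensional 𝕜 E] (f : E →ₗ[𝕜] E) :
    LinearMap.det (LinearMap.adjoint f) = star (LinearMap.det f) := by
  let b := (stdOrthonormalBasis 𝕜 E).toBasis
  rw [← LinearMap.det_toMatrix b, ← LinearMap.det_toMatrix b, LinearMap.toMatrix_adjoint,
    Matrix.det_conjTranspose]

namespace LinearIsometryEquiv

variable {E : Type*} [NormedAddCommGroup E] [InnerProductSpace ℝ E] [FiniteDimensional ℝ E]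

theorem neg_one_pow_finrank_mul_det_mul_det_sub_id (T : E ≃ₗᵢ[ℝ] E) :
    (-1) ^ finrank ℝ E * LinearMap.det T.toLinearMap *
      LinearMap.det (T.toLinearMap - LinearMap.id) =
        LinearMap.det (T.toLinearMap - LinearMap.id) := by
  have hfactor : T.toLinearMap - LinearMap.id =
      T.toLinearMap ∘ₗ LinearMap.adjoint (LinearMap.id - T.toLinearMap) := by
    rw [_root_.map_sub, LinearMap.adjoint_id, T.adjoint_toLinearMap_eq_symm]
    ext x
    simp
  conv_rhs => rw [hfactor, LinearMap.det_comp, LinearMap.det_adjoint, star_trivial, ← neg_sub,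
    ← neg_one_smul ℝ, LinearMap.det_smul]
  ring

theorem det_eq_neg_one_pow_finrank_of_ker_sub_id_eq_bot (T : E ≃ₗᵢ[ℝ] E)
    (hT : LinearMap.ker (T.toLinearMap - LinearMap.id) = ⊥) :
    LinearMap.det T.toLinearMap = (-1) ^ finrank ℝ E := by
  have hne : LinearMap.det (T.toLinearMap - LinearMap.id) ≠ 0 :=
    LinearMap.det_eq_zero_iff_ker_ne_bot.not_left.mpr hT
  have key : (-1) ^ finrank ℝ E * LinearMap.det T.toLinearMap = 1 :=
    (mul_eq_right₀ hne).mp T.neg_one_pow_finrank_mul_det_mul_det_sub_id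
  rw [eq_inv_of_mul_eq_one_right key, ← inv_pow, inv_neg_one]

theorem ker_sub_id_reflection_trans_eq_bot (T : E ≃ₗᵢ[ℝ] E) :
    LinearMap.ker (((LinearMap.ker (T.toLinearMap - LinearMap.id))ᗮ.reflection.trans T).toLinearMap
      - LinearMap.id) = ⊥ := by
  set K := LinearMap.ker (T.toLinearMap - LinearMap.id)
  have hfix : ∀ {x}, x ∈ K ↔ T x = x := by
    intro x
    simp [K, sub_eq_zero]
  rw [LinearMap.ker_eq_bot']
  intro x hx
  replace hx : T (Kᗮ.reflection x) = x := by simpa [sub_eq_zero] using hx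
  have hxK : x ∈ Kᗮ := by
    rw [Submodule.mem_orthogonal]
    intro k hk
    have hneg : inner ℝ k x = - inner ℝ k x := calc
      inner ℝ k x = inner ℝ (T k) (T (Kᗮ.reflection x)) := by rw [hfix.mp hk, hx]
      _ = inner ℝ (Kᗮ.reflection k) (Kᗮ.reflection (Kᗮ.reflection x)) := by
        rw [T.inner_map_map, inner_map_map]
      _ = - inner ℝ k x := by
        rw [Submodule.reflection_reflection,
          Submodule.reflection_mem_subspace_orthogonal_precomplement_eq_neg hk, inner_neg_left]
    linarith
  have hxfix : x ∈ K := hfix.mpr (by rwa [Submodule.reflection_mem_subspace_eq_self hxK] at hx)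
  exact (Submodule.mem_bot ℝ).mp (K.inf_orthogonal_eq_bot ▸ ⟨hxfix, hxK⟩)

theorem det_eq_neg_one_pow_finrank_sub_finrank_ker_sub_id (T : E ≃ₗᵢ[ℝ] E) :
    LinearMap.det T.toLinearMap =
      (-1) ^ (finrank ℝ E - finrank ℝ (LinearMap.ker (T.toLinearMap - LinearMap.id))) := by
  set K := LinearMap.ker (T.toLinearMap - LinearMap.id)
  have hS : LinearMap.det T.toLinearMap * (-1) ^ finrank ℝ K = (-1) ^ finrank ℝ E := by
    rw [← det_eq_neg_one_pow_finrank_of_ker_sub_id_eq_bot _ T.ker_sub_id_reflection_trans_eq_bot]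
    change _ = LinearMap.det (T.toLinearMap ∘ₗ Kᗮ.reflection.toLinearMap)
    rw [LinearMap.det_comp, Submodule.det_reflection, Submodule.orthogonal_orthogonal]
  refine mul_right_cancel₀ (pow_ne_zero (finrank ℝ K) (by norm_num : (-1 : ℝ) ≠ 0)) ?_
  rw [hS, pow_sub_mul_pow _ K.finrank_le]

end LinearIsometryEquiv

/-- for an orthogonal transformation `L` of a finite-dimensional
real inner product space, the codimension of the fixed-point space
`ker (L - id)` is even if `det L = 1` and odd if `det L = -1`. -/
theorem orthogonal_fixed_space_codim_parity
    {E : Type*} [NormedAddCommGroup E] [InnerProductSpace ℝ E]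
    [FiniteDimensional ℝ E] (L : E ≃ₗᵢ[ℝ] E) :
    (LinearMap.det (L.toLinearEquiv : E →ₗ[ℝ] E) = 1 →
      Even (finrank ℝ E -
        finrank ℝ (LinearMap.ker ((L.toLinearEquiv : E →ₗ[ℝ] E) - LinearMap.id)))) ∧
    (LinearMap.det (L.toLinearEquiv : E →ₗ[ℝ] E) = -1 →
      Odd (finrank ℝ E -
        finrank ℝ (LinearMap.ker ((L.toLinearEquiv : E →ₗ[ℝ] E) - LinearMap.id)))) := by
  rw [L.det_eq_neg_one_pow_finrank_sub_finrank_ker_sub_id]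
  exact ⟨(neg_one_pow_eq_one_iff_even (by norm_num)).mp,
    (neg_one_pow_eq_neg_one_iff_odd (by norm_num)).mp⟩
end

section
/- If g = [[A,B],[C,D]] ∈ O(n,n|R), Π is a skew-symmetric n×n real matrix, and CΠ + D is invertible, then (AΠ + B)(CΠ + D)⁻¹ is again skew-symmetric, and the graph of (AΠ+B)(CΠ+D)⁻¹ equals the image under g of the graph of Π. -/
open Module Matrix

noncomputable section

/-- `Rⁿ ⊕ (Rⁿ)*`, with the dual identified with `Rⁿ` via the standard basis. -/
abbrev WW (n : ℕ) := (Fin n → ℝ) × (Fin n → ℝ)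

/-- The canonical symmetric bilinear form on `Rⁿ ⊕ (Rⁿ)*`:
`(x+ξ, y+η) = (1/2)(⟨ξ,y⟩ + ⟨η,x⟩)`. -/
def bform (n : ℕ) : LinearMap.BilinForm ℝ (WW n) :=
  LinearMap.mk₂ ℝ (fun v w => (v.2 ⬝ᵥ w.1 + w.2 ⬝ᵥ v.1) / 2)
    (fun a b c => by
      simp [add_dotProduct, dotProduct_add]; ring)
    (fun r a b => by
      simp [smul_dotProduct, dotProduct_smul, smul_eq_mul]; ring)
    (fun a b c => by
      simp [add_dotProduct, dotProduct_add]; ring)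
    (fun r a b => by
      simp [smul_dotProduct, dotProduct_smul, smul_eq_mul]; ring)

/-- The graph `{(Mξ, ξ) : ξ ∈ Rⁿ}` of an `n×n` matrix `M`. -/
def mgraph {n : ℕ} (M : Matrix (Fin n) (Fin n) ℝ) : Submodule ℝ (WW n) :=
  LinearMap.range ((M.mulVecLin).prod (LinearMap.id : (Fin n → ℝ) →ₗ[ℝ] (Fin n → ℝ)))

/-- The linear action of the block matrix `[[A,B],[C,D]]` on `Rⁿ ⊕ (Rⁿ)*`. -/
def blockActL {n : ℕ} (A B C D : Matrix (Fin n) (Fin n) ℝ) : WW n →ₗ[ℝ] WW n :=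
  LinearMap.prod
    (A.mulVecLin ∘ₗ LinearMap.fst ℝ (Fin n → ℝ) (Fin n → ℝ) +
      B.mulVecLin ∘ₗ LinearMap.snd ℝ (Fin n → ℝ) (Fin n → ℝ))
    (C.mulVecLin ∘ₗ LinearMap.fst ℝ (Fin n → ℝ) (Fin n → ℝ) +
      D.mulVecLin ∘ₗ LinearMap.snd ℝ (Fin n → ℝ) (Fin n → ℝ))

/-- if `g = [[A,B],[C,D]] ∈ O(n,n|R)`, `Θ` is skew-symmetric and
`CΘ + D` is invertible, then `(AΘ+B)(CΘ+D)⁻¹` is skew-symmetric, and its graph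
is the image under `g` of the graph of `Θ`. -/
theorem fractional_action_skew_and_graph {n : ℕ}
    (A B C D Θ : Matrix (Fin n) (Fin n) ℝ)
    (h1 : Aᵀ * C + Cᵀ * A = 0) (h2 : Bᵀ * D + Dᵀ * B = 0)
    (h3 : Aᵀ * D + Cᵀ * B = 1)
    (hΘ : Θᵀ = -Θ) (hinv : IsUnit (C * Θ + D)) :
    ((A * Θ + B) * (C * Θ + D)⁻¹)ᵀ = -((A * Θ + B) * (C * Θ + D)⁻¹) ∧
    mgraph ((A * Θ + B) * (C * Θ + D)⁻¹) =
      Submodule.map (blockActL A B C D) (mgraph Θ) := by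

  classical
  set X := A * Θ + B with hX
  set Y := C * Θ + D with hY
  have hdet : IsUnit Y.det := (Matrix.isUnit_iff_isUnit_det Y).mp hinv
  have hYY : Y * Y⁻¹ = 1 := Matrix.mul_nonsing_inv Y hdet
  have hYY' : Y⁻¹ * Y = 1 := Matrix.nonsing_inv_mul Y hdet
  have h3' : Bᵀ * C + Dᵀ * A = 1 := by
    have := congrArg Matrix.transpose h3
    simpa [Matrix.transpose_add, Matrix.transpose_mul, add_comm] using this
  have key : Xᵀ * Y + Yᵀ * X = 0 := by
    have expand : Xᵀ * Y + Yᵀ * X =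
        Θᵀ * (Aᵀ * C + Cᵀ * A) * Θ + Θᵀ * (Aᵀ * D + Cᵀ * B)
          + (Bᵀ * C + Dᵀ * A) * Θ + (Bᵀ * D + Dᵀ * B) := by
      simp only [hX, hY, Matrix.transpose_add, Matrix.transpose_mul]
      noncomm_ring
    rw [expand, h1, h2, h3, h3', hΘ]
    simp
  have skew : (X * Y⁻¹)ᵀ = -(X * Y⁻¹) := by
    have hXt : Xᵀ = -(Yᵀ * (X * Y⁻¹)) := by
      have hk : Xᵀ * Y = -(Yᵀ * X) := by linear_combination (norm := noncomm_ring) key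
      calc Xᵀ = Xᵀ * Y * Y⁻¹ := by rw [Matrix.mul_assoc, hYY, Matrix.mul_one]
        _ = -(Yᵀ * (X * Y⁻¹)) := by rw [hk]; noncomm_ring
    have hYtinv : Yᵀ⁻¹ * Yᵀ = 1 := by
      apply Matrix.nonsing_inv_mul
      simpa [Matrix.det_transpose] using hdet
    calc (X * Y⁻¹)ᵀ = Yᵀ⁻¹ * Xᵀ := by
          rw [Matrix.transpose_mul, Matrix.transpose_nonsing_inv]
      _ = -(Yᵀ⁻¹ * Yᵀ * (X * Y⁻¹)) := by rw [hXt]; noncomm_ring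
      _ = -(X * Y⁻¹) := by rw [hYtinv, Matrix.one_mul]
  refine ⟨skew, ?_⟩
  ext ⟨v1, v2⟩
  simp only [mgraph, LinearMap.mem_range, Submodule.mem_map, LinearMap.prod_apply,
    Pi.prod, Matrix.mulVecLin_apply, LinearMap.id_apply, Prod.mk.injEq, Prod.ext_iff]
  constructor
  · rintro ⟨ξ, hξ1, hξ2⟩
    refine ⟨(Θ.mulVec (Y⁻¹.mulVec ξ), Y⁻¹.mulVec ξ), ⟨Y⁻¹.mulVec ξ, rfl, rfl⟩, ?_⟩
    have hx : X.mulVec (Y⁻¹.mulVec ξ) = v1 := by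
      rw [Matrix.mulVec_mulVec]; exact hξ1
    have hy : Y.mulVec (Y⁻¹.mulVec ξ) = v2 := by
      rw [Matrix.mulVec_mulVec, hYY, Matrix.one_mulVec]; exact hξ2
    constructor
    · simpa [blockActL, hX, Matrix.add_mulVec, ← Matrix.mulVec_mulVec] using hx
    · simpa [blockActL, hY, Matrix.add_mulVec, ← Matrix.mulVec_mulVec] using hy
  · rintro ⟨⟨w1, w2⟩, ⟨ξ, hw1, hw2⟩, hv1, hv2⟩
    have hw2' : ξ = w2 := hw2
    have hw1' : Θ *ᵥ w2 = w1 := by rw [← hw2']; exact hw1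
    have hxi : X *ᵥ ξ = v1 := by
      rw [← hv1]
      simp [blockActL, hX, Matrix.add_mulVec, ← Matrix.mulVec_mulVec, hw1', hw2']
    have hyi : Y *ᵥ ξ = v2 := by
      rw [← hv2]
      simp [blockActL, hY, Matrix.add_mulVec, ← Matrix.mulVec_mulVec, hw1', hw2']
    refine ⟨Y *ᵥ ξ, ?_, hyi⟩
    show (X * Y⁻¹) *ᵥ (Y *ᵥ ξ) = v1
    rw [Matrix.mulVec_mulVec, Matrix.mul_assoc, hYY', Matrix.mul_one, hxi]
end
end
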